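/- arXiv:0711.3028 — 9 statements merged into one kernel-verified Lean document; each statement's English description precedes it below -/
import Mathlib

section
/- Let A be a unital C*-algebra and v ∈ A a partial isometry (v·v*·v = v), and let v₁ = [[1 − v v*, v], [v*, 1 − v* v]] ∈ M₂(A). For t ≥ 0 define v₁(t) = (1/2)(e^{2i·arctan(t)}(v₁ − 1₂) + (v₁ + 1₂)). Then each v₁(t) is unitary in M₂(A), the map t ↦ v₁(t) is norm-continuous, v₁(0) = v₁ and v₁(t) → 1₂ in norm as t → ∞. Moreover, with e = [[1,0],[0,0]], one has the explicit formula e_v(t) := v₁(t)·e·v₁(t)* = [[1 − (1+t²)^{−1} v v* , −i t (1+t²)^{−1} v], [i t (1+t²)^{−1} v* , (1+t²)^{−1} v* v]], and e_v(t) is a projection (self-adjoint idempotent) in M₂(A) for every t ≥ 0. -/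
/-!
Write `w` for the matrix `v₁`. Because `v` is a partial isometry, `w` is a symmetry: `w* = w` and
`w² = 1`. Hence `p = (1 + w) / 2` is a projection and `v₁(t) = p - z (1 - p)` with
`z = e^{2i arctan t}` on the unit circle, which makes `v₁(t)` unitary, continuous in `t`, equal to
`w` at `z = 1` (`t = 0`) and to `1` at `z = -1` (`t → ∞`). Since `e^{2i arctan t} = (1 + it)/(1 - it)`,
`v₁(t) = (1 - it)⁻¹ (w - it)`, from which the formula for `e_v(t)` is a direct computation, and
`e_v(t)` is a projection as a unitary conjugate of the projection `e`.
-/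

open scoped Matrix ComplexConjugate
open Complex

lemma Complex.exp_two_mul_I_mul_arctan {z : ℂ} (h₁ : 1 + z * I ≠ 0) (h₂ : 1 - z * I ≠ 0) :
    exp (2 * I * arctan z) = (1 + z * I) / (1 - z * I) := by
  rw [arctan, ← mul_assoc, show 2 * I * (-I / 2) = 1 by simp [field], one_mul,
    exp_log (div_ne_zero h₁ h₂)]

lemma Complex.one_add_ofReal_mul_I_ne_zero (t : ℝ) : 1 + (t : ℂ) * I ≠ 0 := fun h => by
  simpa using congrArg re h

lemma Complex.one_sub_ofReal_mul_I_ne_zero (t : ℝ) : 1 - (t : ℂ) * I ≠ 0 := fun h => by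
  simpa using congrArg re h

lemma Complex.exp_two_mul_I_mul_arctan_ofReal (t : ℝ) :
    exp (2 * I * Real.arctan t) = (1 + t * I) / (1 - t * I) := by
  rw [ofReal_arctan, exp_two_mul_I_mul_arctan (one_add_ofReal_mul_I_ne_zero t)
    (one_sub_ofReal_mul_I_ne_zero t)]

lemma Complex.norm_exp_two_mul_I_mul_ofReal (x : ℝ) : ‖exp (2 * I * x)‖ = 1 := by
  rw [show 2 * I * x = ((2 * x : ℝ) : ℂ) * I by push_cast; ring, norm_exp_ofReal_mul_I]

lemma Complex.tendsto_exp_two_mul_I_mul_arctan_atTop :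
    Filter.Tendsto (fun t : ℝ => exp (2 * I * Real.arctan t)) Filter.atTop (nhds (-1)) := by
  have harctan : Filter.Tendsto Real.arctan Filter.atTop (nhds (Real.pi / 2)) :=
    Real.tendsto_arctan_atTop.mono_right nhdsWithin_le_nhds
  have hexp : exp (2 * I * ((Real.pi / 2 : ℝ) : ℂ)) = -1 := by
    rw [show 2 * I * ((Real.pi / 2 : ℝ) : ℂ) = Real.pi * I by push_cast; ring, exp_pi_mul_I]
  rw [← hexp]
  exact ((by fun_prop : Continuous fun x : ℝ => exp (2 * I * x)).tendsto _).comp harctan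

lemma IsStarProjection.mul_mul_star {R : Type*} [Semiring R] [StarRing R] {p u : R}
    (hp : IsStarProjection p) (hu : star u * u = 1) : IsStarProjection (u * p * star u) where
  isIdempotentElem := by
    rw [IsIdempotentElem,
      show u * p * star u * (u * p * star u) = u * (p * (star u * u) * p) * star u by
        simp only [mul_assoc],
      hu, mul_one, hp.isIdempotentElem.eq, mul_assoc]
  isSelfAdjoint := by
    rw [IsSelfAdjoint, star_mul, star_mul, star_star, hp.isSelfAdjoint.star_eq, mul_assoc]

lemma isStarProjection_e₁₁ (A : Type*) [Ring A] [StarRing A] :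
    IsStarProjection (!![1, 0; 0, 0] : Matrix (Fin 2) (Fin 2) A) := by
  rw [isStarProjection_iff']
  constructor <;> ext i j <;> fin_cases i <;> fin_cases j <;> simp [Matrix.star_apply]

lemma smul_mul_mul_star_smul {R : Type*} [Ring R] [StarRing R] [Algebra ℂ R] [StarModule ℂ R]
    (c : ℂ) (x e : R) : (c • x) * e * star (c • x) = (c * conj c) • (x * e * star x) := by
  rw [star_smul, smul_mul_assoc, smul_mul_assoc, mul_smul_comm, smul_smul, Complex.star_def]

section SymmetryTwist

variable {B : Type*} [Ring B] [Algebra ℂ B]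

/-- For `p = (1 + w) / 2` this is `p - z • (1 - p)`. -/
noncomputable def symmetryTwist (w : B) (z : ℂ) : B := (2⁻¹ : ℂ) • (z • (w - 1) + (w + 1))

lemma symmetryTwist_one (w : B) : symmetryTwist w 1 = w := by
  unfold symmetryTwist; module

lemma symmetryTwist_neg_one (w : B) : symmetryTwist w (-1) = 1 := by
  unfold symmetryTwist; module

lemma symmetryTwist_mul {w : B} (hw : w * w = 1) (z z' : ℂ) :
    symmetryTwist w z * symmetryTwist w z' = symmetryTwist w (-(z * z')) := by
  unfold symmetryTwist
  simp only [smul_add, smul_sub, add_mul, mul_add, sub_mul, mul_sub, smul_mul_assoc,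
    mul_smul_comm, smul_smul, hw, one_mul, mul_one]
  module

lemma symmetryTwist_div_one_sub_mul_I (w : B) (t : ℝ) :
    symmetryTwist w ((1 + t * I) / (1 - t * I)) = (1 - t * I)⁻¹ • (w - (t * I) • 1) := by
  have h := one_sub_ofReal_mul_I_ne_zero t
  unfold symmetryTwist
  rw [div_eq_mul_inv]
  match_scalars <;> field_simp <;> ring

lemma continuous_symmetryTwist [TopologicalSpace B] [IsTopologicalRing B] [ContinuousSMul ℂ B]
    (w : B) : Continuous (symmetryTwist w) := by
  unfold symmetryTwist; fun_prop

variable [StarRing B] [StarModule ℂ B]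

lemma star_symmetryTwist {w : B} (hw : IsSelfAdjoint w) (z : ℂ) :
    star (symmetryTwist w z) = symmetryTwist w (conj z) := by
  simp [symmetryTwist, star_add, star_sub, star_smul, hw.star_eq]

lemma symmetryTwist_mem_unitary {w : B} (hw : IsSelfAdjoint w) (hw2 : w * w = 1) {z : ℂ}
    (hz : ‖z‖ = 1) : symmetryTwist w z ∈ unitary B := by
  have hzz : conj z * z = 1 := by rw [conj_mul', hz]; simp
  refine ⟨?_, ?_⟩ <;> rw [star_symmetryTwist hw, symmetryTwist_mul hw2]
  · rw [hzz, symmetryTwist_neg_one]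
  · rw [mul_comm, hzz, symmetryTwist_neg_one]

end SymmetryTwist

section PartialIsometry

variable {A : Type*} [Ring A] [StarRing A]

def partialIsometrySymmetry (v : A) : Matrix (Fin 2) (Fin 2) A :=
  !![1 - v * star v, v; star v, 1 - star v * v]

variable {v : A}

lemma star_mul_mul_star_of_mul_star_mul (hv : v * star v * v = v) :
    star v * v * star v = star v := by
  simpa [star_mul, mul_assoc] using congrArg star hv

lemma isSelfAdjoint_partialIsometrySymmetry (v : A) :
    IsSelfAdjoint (partialIsometrySymmetry v) := by
  ext i j
  fin_cases i <;> fin_cases j <;>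
    simp [partialIsometrySymmetry, Matrix.star_apply, star_sub, star_mul]

lemma partialIsometrySymmetry_mul_self (hv : v * star v * v = v) :
    partialIsometrySymmetry v * partialIsometrySymmetry v = 1 := by
  have hv' := star_mul_mul_star_of_mul_star_mul hv
  ext i j
  fin_cases i <;> fin_cases j <;>
    simp [partialIsometrySymmetry, Matrix.mul_apply, Fin.sum_univ_succ, mul_sub, sub_mul,
      ← mul_assoc, hv, hv']

variable [Algebra ℂ A] [StarModule ℂ A]

lemma partialIsometrySymmetry_sub_mul_e₁₁_mul_star (hv : v * star v * v = v) (t : ℝ) :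
    (partialIsometrySymmetry v - ((t : ℂ) * I) • 1) * !![1, 0; 0, 0] *
      star (partialIsometrySymmetry v - ((t : ℂ) * I) • 1) =
    !![((1 : ℂ) + (t : ℂ) ^ 2) • 1 - v * star v, (-I * t) • v; (I * t) • star v, star v * v] := by
  have hv' := star_mul_mul_star_of_mul_star_mul hv
  ext i j
  fin_cases i <;> fin_cases j <;>
    simp only [partialIsometrySymmetry, Matrix.mul_apply, Fin.sum_univ_succ, Matrix.star_apply]
  all_goals simp [mul_add, sub_mul, smul_smul, star_sub, star_smul, star_mul, mul_sub,
    smul_sub, ← mul_assoc, hv, hv']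
  all_goals (match_scalars <;> ring_nf <;> simp [I_sq])

lemma inv_smul_partialIsometrySymmetry_sub_mul_e₁₁_mul_star (hv : v * star v * v = v) (t : ℝ) :
    ((1 - (t : ℂ) * I)⁻¹ • (partialIsometrySymmetry v - ((t : ℂ) * I) • 1)) * !![1, 0; 0, 0] *
      star ((1 - (t : ℂ) * I)⁻¹ • (partialIsometrySymmetry v - ((t : ℂ) * I) • 1)) =
    !![1 - ((1 : ℂ) + (t : ℂ) ^ 2)⁻¹ • (v * star v),
         (-I * (t : ℂ) * ((1 : ℂ) + (t : ℂ) ^ 2)⁻¹) • v;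
       (I * (t : ℂ) * ((1 : ℂ) + (t : ℂ) ^ 2)⁻¹) • star v,
         ((1 : ℂ) + (t : ℂ) ^ 2)⁻¹ • (star v * v)] := by
  have hnorm : (1 - (t : ℂ) * I)⁻¹ * conj (1 - (t : ℂ) * I)⁻¹ = ((1 : ℂ) + (t : ℂ) ^ 2)⁻¹ := by
    rw [map_inv₀, ← mul_inv, map_sub, map_one, map_mul, conj_ofReal, conj_I]
    ring_nf; simp [I_sq]
  have hne : (1 : ℂ) + (t : ℂ) ^ 2 ≠ 0 := by exact_mod_cast (by positivity : (1 : ℝ) + t ^ 2 ≠ 0)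
  rw [smul_mul_mul_star_smul, hnorm, partialIsometrySymmetry_sub_mul_e₁₁_mul_star hv]
  ext i j
  fin_cases i <;> fin_cases j <;> simp [smul_sub, smul_smul, mul_comm, hne]

end PartialIsometry

theorem stmt1_general {A : Type*} [NormedRing A] [StarRing A]
    [NormedAlgebra ℂ A] [StarModule ℂ A]
    (v : A) (hv : v * star v * v = v)
    (v₁ : Matrix (Fin 2) (Fin 2) A)
    (hv₁ : v₁ = !![1 - v * star v, v; star v, 1 - star v * v])
    (v₁t : ℝ → Matrix (Fin 2) (Fin 2) A)
    (hv₁t : v₁t = fun t : ℝ =>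
      (2⁻¹ : ℂ) • (Complex.exp (2 * Complex.I * (Real.arctan t : ℂ)) • (v₁ - 1) + (v₁ + 1)))
    (e : Matrix (Fin 2) (Fin 2) A) (he : e = !![(1 : A), 0; 0, 0])
    (ev : ℝ → Matrix (Fin 2) (Fin 2) A)
    (hev : ev = fun t : ℝ =>
      !![1 - ((1 : ℂ) + (t : ℂ) ^ 2)⁻¹ • (v * star v),
           (-Complex.I * (t : ℂ) * ((1 : ℂ) + (t : ℂ) ^ 2)⁻¹) • v;
         (Complex.I * (t : ℂ) * ((1 : ℂ) + (t : ℂ) ^ 2)⁻¹) • star v,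
           ((1 : ℂ) + (t : ℂ) ^ 2)⁻¹ • (star v * v)]) :
    (∀ t : ℝ, 0 ≤ t → star (v₁t t) * v₁t t = 1 ∧ v₁t t * star (v₁t t) = 1) ∧
    ContinuousOn v₁t (Set.Ici (0 : ℝ)) ∧
    v₁t 0 = v₁ ∧
    Filter.Tendsto v₁t Filter.atTop (nhds 1) ∧
    (∀ t : ℝ, 0 ≤ t → v₁t t * e * star (v₁t t) = ev t) ∧
    (∀ t : ℝ, 0 ≤ t → star (ev t) = ev t ∧ ev t * ev t = ev t) := by
  replace hv₁ : v₁ = partialIsometrySymmetry v := hv₁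
  replace hv₁t : v₁t = fun t : ℝ => symmetryTwist v₁ (exp (2 * I * (Real.arctan t : ℂ))) := hv₁t
  have hunit (t : ℝ) : v₁t t ∈ unitary (Matrix (Fin 2) (Fin 2) A) := by
    rw [hv₁t, hv₁]
    exact symmetryTwist_mem_unitary (isSelfAdjoint_partialIsometrySymmetry v)
      (partialIsometrySymmetry_mul_self hv) (norm_exp_two_mul_I_mul_ofReal _)
  have hformula (t : ℝ) : v₁t t * e * star (v₁t t) = ev t := by
    simp only [hv₁t, hev, he]
    rw [exp_two_mul_I_mul_arctan_ofReal, symmetryTwist_div_one_sub_mul_I, hv₁]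
    exact inv_smul_partialIsometrySymmetry_sub_mul_e₁₁_mul_star hv t
  have hcont : Continuous v₁t := hv₁t ▸ (continuous_symmetryTwist v₁).comp (by fun_prop)
  refine ⟨fun t _ => ⟨Unitary.star_mul_self_of_mem (hunit t),
    Unitary.mul_star_self_of_mem (hunit t)⟩, hcont.continuousOn, ?_, ?_,
    fun t _ => hformula t, fun t _ => ?_⟩
  · simp only [hv₁t, Real.arctan_zero, ofReal_zero, mul_zero, exp_zero, symmetryTwist_one]
  · rw [hv₁t, ← symmetryTwist_neg_one v₁]
    exact ((continuous_symmetryTwist v₁).tendsto _).comp tendsto_exp_two_mul_I_mul_arctan_atTop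
  · have h := (isStarProjection_e₁₁ A).mul_mul_star (Unitary.star_mul_self_of_mem (hunit t))
    rw [← he, hformula] at h
    exact ⟨h.isSelfAdjoint, h.isIdempotentElem⟩

/-- For a partial isometry `v` in a unital C*-algebra, the path
`v₁(t) = ½(e^{2i·arctan t}(v₁ - 1) + (v₁ + 1))` consists of unitaries, is norm-continuous,
starts at `v₁` and tends to `1` at infinity; moreover `e_v(t) = v₁(t) e v₁(t)*` is given
by the explicit matrix formula and is a projection for every `t ≥ 0`. -/
theorem stmt1 {A : Type*} [NormedRing A] [StarRing A] [CStarRing A]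
    [NormedAlgebra ℂ A] [StarModule ℂ A] [CompleteSpace A]
    (v : A) (hv : v * star v * v = v)
    (v₁ : Matrix (Fin 2) (Fin 2) A)
    (hv₁ : v₁ = !![1 - v * star v, v; star v, 1 - star v * v])
    (v₁t : ℝ → Matrix (Fin 2) (Fin 2) A)
    (hv₁t : v₁t = fun t : ℝ =>
      (2⁻¹ : ℂ) • (Complex.exp (2 * Complex.I * (Real.arctan t : ℂ)) • (v₁ - 1) + (v₁ + 1)))
    (e : Matrix (Fin 2) (Fin 2) A) (he : e = !![(1 : A), 0; 0, 0])
    (ev : ℝ → Matrix (Fin 2) (Fin 2) A)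
    (hev : ev = fun t : ℝ =>
      !![1 - ((1 : ℂ) + (t : ℂ) ^ 2)⁻¹ • (v * star v),
           (-Complex.I * (t : ℂ) * ((1 : ℂ) + (t : ℂ) ^ 2)⁻¹) • v;
         (Complex.I * (t : ℂ) * ((1 : ℂ) + (t : ℂ) ^ 2)⁻¹) • star v,
           ((1 : ℂ) + (t : ℂ) ^ 2)⁻¹ • (star v * v)]) :
    (∀ t : ℝ, 0 ≤ t → star (v₁t t) * v₁t t = 1 ∧ v₁t t * star (v₁t t) = 1) ∧
    ContinuousOn v₁t (Set.Ici (0 : ℝ)) ∧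
    v₁t 0 = v₁ ∧
    Filter.Tendsto v₁t Filter.atTop (nhds 1) ∧
    (∀ t : ℝ, 0 ≤ t → v₁t t * e * star (v₁t t) = ev t) ∧
    (∀ t : ℝ, 0 ≤ t → star (ev t) = ev t ∧ ev t * ev t = ev t) :=
  stmt1_general v hv v₁ hv₁ v₁t hv₁t e he ev hev
end

section
/- Let A be a unital C*-algebra, v ∈ A a partial isometry (v·v*·v = v), and t ∈ ℝ. Define e_v(t) = [[1 − (1+t²)^{−1} v v* , −i t (1+t²)^{−1} v], [i t (1+t²)^{−1} v* , (1+t²)^{−1} v* v]], ê_v(t) = [[t² (1+t²)^{−1} v v* , −i t (1+t²)^{−1} v], [i t (1+t²)^{−1} v* , (1+t²)^{−1} v* v]], and e⁰_v = [[1 − v v*, 0], [0, 0]] in M₂(A). Then ê_v(t) and e⁰_v are projections, ê_v(t)·e⁰_v = 0 = e⁰_v·ê_v(t), and e_v(t) = ê_v(t) + e⁰_v; in particular e_v(t) is a projection commuting with both ê_v(t) and e⁰_v. -/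
open scoped Matrix

set_option maxHeartbeats 1000000 in
/-- For a partial isometry `v` in a unital C*-algebra and `t ∈ ℝ`, the
matrices `ê_v(t)` and `e⁰_v` are projections which are mutually orthogonal, and
`e_v(t) = ê_v(t) + e⁰_v`; in particular `e_v(t)` is a projection commuting with both. -/
theorem stmt2 {A : Type*} [NormedRing A] [StarRing A] [CStarRing A]
    [NormedAlgebra ℂ A] [StarModule ℂ A] [CompleteSpace A]
    (v : A) (hv : v * star v * v = v) (t : ℝ)
    (ev evhat ev0 : Matrix (Fin 2) (Fin 2) A)
    (hev : ev =
      !![1 - ((1 : ℂ) + (t : ℂ) ^ 2)⁻¹ • (v * star v),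
           (-Complex.I * (t : ℂ) * ((1 : ℂ) + (t : ℂ) ^ 2)⁻¹) • v;
         (Complex.I * (t : ℂ) * ((1 : ℂ) + (t : ℂ) ^ 2)⁻¹) • star v,
           ((1 : ℂ) + (t : ℂ) ^ 2)⁻¹ • (star v * v)])
    (hevhat : evhat =
      !![((t : ℂ) ^ 2 * ((1 : ℂ) + (t : ℂ) ^ 2)⁻¹) • (v * star v),
           (-Complex.I * (t : ℂ) * ((1 : ℂ) + (t : ℂ) ^ 2)⁻¹) • v;
         (Complex.I * (t : ℂ) * ((1 : ℂ) + (t : ℂ) ^ 2)⁻¹) • star v,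
           ((1 : ℂ) + (t : ℂ) ^ 2)⁻¹ • (star v * v)])
    (hev0 : ev0 = !![1 - v * star v, 0; 0, 0]) :
    star evhat = evhat ∧ evhat * evhat = evhat ∧
    star ev0 = ev0 ∧ ev0 * ev0 = ev0 ∧
    evhat * ev0 = 0 ∧ ev0 * evhat = 0 ∧
    ev = evhat + ev0 ∧
    star ev = ev ∧ ev * ev = ev ∧
    ev * evhat = evhat * ev ∧ ev * ev0 = ev0 * ev := by
  have hc : ((1 : ℂ) + (t : ℂ) ^ 2) ≠ 0 := by
    have h : (1:ℂ)+(t:ℂ)^2 = ((1+t^2 : ℝ) : ℂ) := by push_cast; ring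
    rw [h]
    exact_mod_cast ne_of_gt (by positivity : (0:ℝ) < 1 + t^2)
  have hvq : v * (star v * v) = v := by rw [← mul_assoc, hv]
  have hsv : star v * (v * star v) = star v := by
    have := congrArg star hv; simpa [mul_assoc, star_mul] using this
  have hqs : star v * v * star v = star v := by rw [mul_assoc, hsv]
  have h1 : star evhat = evhat := by
    subst hevhat
    ext i j
    fin_cases i <;> fin_cases j <;>
      simp [Matrix.conjTranspose_apply, Complex.ext_iff]
  have h2 : evhat * evhat = evhat := by
    subst hevhat
    ext i j
    fin_cases i <;> fin_cases j <;>
      simp [Matrix.mul_apply, Fin.sum_univ_two, mul_smul_comm, smul_mul_assoc,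
        smul_smul, hv, hvq, hsv, hqs, mul_assoc] <;>
      match_scalars <;> (field_simp; try ring_nf; try simp [Complex.I_sq]; try ring_nf)
  have h3 : star ev0 = ev0 := by
    subst hev0
    ext i j
    fin_cases i <;> fin_cases j <;>
      simp [Matrix.conjTranspose_apply, star_sub, star_mul]
  have h4 : ev0 * ev0 = ev0 := by
    subst hev0
    ext i j
    fin_cases i <;> fin_cases j <;>
      simp [Matrix.mul_apply, Fin.sum_univ_two, mul_sub, sub_mul, mul_assoc, hsv, hvq]
  have h5 : evhat * ev0 = 0 := by
    subst hevhat hev0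
    ext i j
    fin_cases i <;> fin_cases j <;>
      simp [Matrix.mul_apply, Fin.sum_univ_two, mul_sub, sub_mul, mul_smul_comm,
        smul_mul_assoc, smul_sub, mul_assoc, hsv, hvq, hqs]
  have h6 : ev0 * evhat = 0 := by
    subst hevhat hev0
    ext i j
    fin_cases i <;> fin_cases j <;>
      simp [Matrix.mul_apply, Fin.sum_univ_two, mul_sub, sub_mul, mul_smul_comm,
        smul_mul_assoc, smul_sub, sub_smul, mul_assoc, hsv, hvq, hqs]
  have h7 : ev = evhat + ev0 := by
    subst hev hevhat hev0
    ext i j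
    fin_cases i <;> fin_cases j <;>
      simp [Matrix.add_apply] <;>
      match_scalars <;> (field_simp; try ring_nf; try simp [Complex.I_sq]; try ring_nf)
  have h8 : star ev = ev := by rw [h7, star_add, h1, h3]
  have h9 : ev * ev = ev := by
    rw [h7, add_mul, mul_add, mul_add, h2, h4, h5, h6, add_zero, zero_add]
  have h10 : ev * evhat = evhat * ev := by
    simp [h7, add_mul, mul_add, h2, h5, h6]
  have h11 : ev * ev0 = ev0 * ev := by
    simp [h7, add_mul, mul_add, h4, h5, h6]
  exact ⟨h1, h2, h3, h4, h5, h6, h7, h8, h9, h10, h11⟩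
end

section
/- Let A be a C*-algebra and let v, w ∈ A be partial isometries (v·v*·v = v and w·w*·w = w) with the same source projection: v* v = w* w = p. For θ ∈ [0, π/2] define the 2×2 matrix V_θ = [[cos²θ·v + sin²θ·p , cosθ·sinθ·(w* − v w*)], [cosθ·sinθ·(p − v) , cos²θ·w* + sin²θ·v w*]] over A. Then θ ↦ V_θ is norm-continuous, every V_θ is a partial isometry in M₂(A) (i.e. V_θ·V_θ*·V_θ = V_θ), V_0 = [[v, 0], [0, w*]], and V_{π/2} = [[p, 0], [0, v w*]]. -/
open scoped Matrix

/-- For partial isometries `v, w` in a C*-algebra with the same source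
projection `p = v* v = w* w`, the path `V_θ` is a norm-continuous path of partial
isometries in `M₂(A)` from `diag(v, w*)` to `diag(p, v w*)`. -/
theorem stmt4 {A : Type*} [NonUnitalNormedRing A] [StarRing A] [CStarRing A]
    [NormedSpace ℂ A] [IsScalarTower ℂ A A] [SMulCommClass ℂ A A] [StarModule ℂ A]
    [CompleteSpace A]
    (v w p : A) (hv : v * star v * v = v) (hw : w * star w * w = w)
    (hp : star v * v = p) (hp' : star w * w = p)
    (V : ℝ → Matrix (Fin 2) (Fin 2) A)
    (hV : V = fun θ : ℝ =>
      !![(Real.cos θ) ^ 2 • v + (Real.sin θ) ^ 2 • p,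
           (Real.cos θ * Real.sin θ) • (star w - v * star w);
         (Real.cos θ * Real.sin θ) • (p - v),
           (Real.cos θ) ^ 2 • star w + (Real.sin θ) ^ 2 • (v * star w)]) :
    ContinuousOn V (Set.Icc (0 : ℝ) (Real.pi / 2)) ∧
    (∀ θ ∈ Set.Icc (0 : ℝ) (Real.pi / 2), V θ * star (V θ) * V θ = V θ) ∧
    V 0 = !![v, 0; 0, star w] ∧
    V (Real.pi / 2) = !![p, 0; 0, v * star w] := by
  subst hV
  have sp : star p = p := by rw [← hp, star_mul, star_star]
  refine ⟨?_, ?_, ?_, ?_⟩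
  · apply Continuous.continuousOn
    apply continuous_matrix
    intro i j
    fin_cases i <;> fin_cases j <;> simp <;> fun_prop
  · intro θ _
    simp only
    have hcs := Real.sin_sq_add_cos_sq θ
    have hvp : v * p = v := by rw [← hp, ← mul_assoc, hv]
    have hpv : p * star v = star v := by
      have := congrArg star hvp; rwa [star_mul, sp] at this
    have hwp : w * p = w := by rw [← hp', ← mul_assoc, hw]
    have hpw : p * star w = star w := by
      have := congrArg star hwp; rwa [star_mul, sp] at this
    have hpp : p * p = p := by rw [← hp, mul_assoc, ← mul_assoc v, hv]
    have hvp' : ∀ x : A, v * (p * x) = v * x := fun x => by rw [← mul_assoc, hvp]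
    have hpv' : ∀ x : A, p * (star v * x) = star v * x := fun x => by rw [← mul_assoc, hpv]
    have hwp' : ∀ x : A, w * (p * x) = w * x := fun x => by rw [← mul_assoc, hwp]
    have hpw' : ∀ x : A, p * (star w * x) = star w * x := fun x => by rw [← mul_assoc, hpw]
    have hpp' : ∀ x : A, p * (p * x) = p * x := fun x => by rw [← mul_assoc, hpp]
    have hvv' : ∀ x : A, star v * (v * x) = p * x := fun x => by rw [← mul_assoc, hp]
    have hww' : ∀ x : A, star w * (w * x) = p * x := fun x => by rw [← mul_assoc, hp']
    ext i j
    fin_cases i <;> fin_cases j <;>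
    · simp only [Fin.zero_eta, Fin.mk_one, Fin.isValue, Matrix.mul_apply, Fin.sum_univ_two,
        Matrix.star_apply, Matrix.of_apply, Matrix.cons_val', Matrix.cons_val_zero,
        Matrix.cons_val_one, Matrix.head_cons, Matrix.head_fin_const, Matrix.empty_val',
        Matrix.cons_val_fin_one]
      simp only [star_add, star_smul, star_sub, star_mul, star_star, star_trivial, sp,
        mul_add, add_mul, sub_mul, mul_sub, smul_mul_assoc, mul_smul_comm,
        smul_sub, smul_add, smul_smul, mul_assoc,
        hvp', hpv', hwp', hpw', hpp', hvv', hww', hvp, hpv, hwp, hpw, hpp, hp, hp']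
      match_scalars <;>
        first
        | (linear_combination (norm := ring1) (0 : ℝ) * hcs)
        | (linear_combination (norm := ring1) (Real.sin θ^2 + Real.sin θ^4 + Real.cos θ^2*Real.sin θ^2) * hcs)
        | (linear_combination (norm := ring1) (-(Real.sin θ^2 + Real.sin θ^4 + Real.cos θ^2*Real.sin θ^2)) * hcs)
        | (linear_combination (norm := ring1) (Real.cos θ^2 + Real.cos θ^2*Real.sin θ^2 + Real.cos θ^4) * hcs)
        | (linear_combination (norm := ring1) (-(Real.cos θ^2 + Real.cos θ^2*Real.sin θ^2 + Real.cos θ^4)) * hcs)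
        | (linear_combination (norm := ring1) (Real.cos θ*Real.sin θ + Real.cos θ*Real.sin θ^3 + Real.cos θ^3*Real.sin θ) * hcs)
        | (linear_combination (norm := ring1) (-(Real.cos θ*Real.sin θ + Real.cos θ*Real.sin θ^3 + Real.cos θ^3*Real.sin θ)) * hcs)
  · norm_num [Matrix.etaExpand_eq]
  · norm_num [Real.cos_pi_div_two, Real.sin_pi_div_two, Matrix.etaExpand_eq]
end

section
/- Let A be a C*-algebra, v ∈ A a partial isometry (v·v*·v = v), and p, q ∈ A projections with p·q = 0 and v* v = p + q. Then v = v p + v q, v v* = v p v* + v q v*, and (v p v*)·(v q v*) = 0. Moreover, for θ ∈ [0, π/2] the matrix W_θ = [[v p + cos²θ·v q , cosθ·sinθ·v q], [cosθ·sinθ·v q , sin²θ·v q]] over A defines a norm-continuous path of partial isometries in M₂(A) (W_θ·W_θ*·W_θ = W_θ for every θ), with W_0 = [[v, 0], [0, 0]] and W_{π/2} = [[v p, 0], [0, v q]]. -/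
open scoped Matrix

lemma star_fin_two' {A : Type*} [NonUnitalNormedRing A] [StarRing A] (x y z w : A) :
    star !![x, y; z, w] = !![star x, star z; star y, star w] := by
  ext i j
  fin_cases i <;> fin_cases j <;> simp [Matrix.star_apply]

lemma key_partial_isometry {A : Type*} [NonUnitalRing A] [Module ℝ A] [IsScalarTower ℝ A A]
    [SMulCommClass ℝ A A]
    (a b a' b' : A) (c s : ℝ) (hcs : c ^ 2 + s ^ 2 = 1)
    (haa : a * a' * a = a) (hbb : b * b' * b = b)
    (hab : a * b' = 0) (hba : b * a' = 0)
    (haab : a * a' * b = 0) (hbba : b * b' * a = 0) :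
    !![a + c ^ 2 • b, (c * s) • b; (c * s) • b, s ^ 2 • b] *
      !![a' + c ^ 2 • b', (c * s) • b'; (c * s) • b', s ^ 2 • b'] *
      !![a + c ^ 2 • b, (c * s) • b; (c * s) • b, s ^ 2 • b] =
      !![a + c ^ 2 • b, (c * s) • b; (c * s) • b, s ^ 2 • b] := by
  have hcs2 : (c ^ 2 + s ^ 2) ^ 2 = 1 := by rw [hcs]; ring
  rw [Matrix.mul_fin_two, Matrix.mul_fin_two]
  ext i j
  fin_cases i <;> fin_cases j <;>
    simp [mul_add, add_mul, smul_mul_assoc, mul_smul_comm, smul_smul, smul_add,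
      haa, hbb, hab, hba, haab, hbba] <;>
    match_scalars <;>
    (first
      | ring1
      | linear_combination (c ^ 2) * hcs2
      | linear_combination (c * s) * hcs2
      | linear_combination (s ^ 2) * hcs2)

/-- Let `v` be a partial isometry in a C*-algebra and `p, q` orthogonal
projections with `v* v = p + q`. Then `v = v p + v q`, `v v* = v p v* + v q v*`,
`(v p v*)(v q v*) = 0`, and `W_θ` is a norm-continuous path of partial isometries in
`M₂(A)` from `diag(v, 0)` to `diag(v p, v q)`. -/
theorem stmt5 {A : Type*} [NonUnitalNormedRing A] [StarRing A] [CStarRing A]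
    [NormedSpace ℂ A] [IsScalarTower ℂ A A] [SMulCommClass ℂ A A] [StarModule ℂ A]
    [CompleteSpace A]
    (v p q : A) (hv : v * star v * v = v)
    (hp : star p = p) (hp2 : p * p = p) (hq : star q = q) (hq2 : q * q = q)
    (hpq : p * q = 0) (hsrc : star v * v = p + q)
    (W : ℝ → Matrix (Fin 2) (Fin 2) A)
    (hW : W = fun θ : ℝ =>
      !![v * p + (Real.cos θ) ^ 2 • (v * q), (Real.cos θ * Real.sin θ) • (v * q);
         (Real.cos θ * Real.sin θ) • (v * q), (Real.sin θ) ^ 2 • (v * q)]) :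
    v = v * p + v * q ∧
    v * star v = v * p * star v + v * q * star v ∧
    (v * p * star v) * (v * q * star v) = 0 ∧
    ContinuousOn W (Set.Icc (0 : ℝ) (Real.pi / 2)) ∧
    (∀ θ ∈ Set.Icc (0 : ℝ) (Real.pi / 2), W θ * star (W θ) * W θ = W θ) ∧
    W 0 = !![v, 0; 0, 0] ∧
    W (Real.pi / 2) = !![v * p, 0; 0, v * q] := by
  have hqp : q * p = 0 := by
    have := congrArg star hpq
    simpa [star_mul, hp, hq] using this
  have hvpq : v * (p + q) = v := by rw [← hsrc, ← mul_assoc, hv]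
  have h1 : v = v * p + v * q := by rw [← mul_add, hvpq]
  -- right-associated auxiliary identities
  have eP : star v * (v * p) = p := by
    rw [← mul_assoc, hsrc, add_mul, hp2, hqp, add_zero]
  have eQ : star v * (v * q) = q := by
    rw [← mul_assoc, hsrc, add_mul, hpq, hq2, zero_add]
  have haa : (v * p) * (p * star v) * (v * p) = v * p := by
    simp only [mul_assoc]; rw [eP]; simp [hp2, ← mul_assoc]
  have hbb : (v * q) * (q * star v) * (v * q) = v * q := by
    simp only [mul_assoc]; rw [eQ]; simp [hq2, ← mul_assoc]
  have hab : (v * p) * (q * star v) = 0 := by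
    simp only [mul_assoc]
    rw [← mul_assoc p q, hpq, zero_mul, mul_zero]
  have hba : (v * q) * (p * star v) = 0 := by
    simp only [mul_assoc]
    rw [← mul_assoc q p, hqp, zero_mul, mul_zero]
  have haab : (v * p) * (p * star v) * (v * q) = 0 := by
    simp only [mul_assoc]; rw [eQ, ← mul_assoc p p q, hp2, hpq, mul_zero]
  have hbba : (v * q) * (q * star v) * (v * p) = 0 := by
    simp only [mul_assoc]; rw [eP, ← mul_assoc q q p, hq2, hqp, mul_zero]
  have h3 : (v * p * star v) * (v * q * star v) = 0 := by
    calc (v * p * star v) * (v * q * star v)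
        = (v * p) * ((star v * (v * q)) * star v) := by simp only [mul_assoc]
      _ = 0 := by rw [eQ, hab]
  have h2 : v * star v = v * p * star v + v * q * star v := by
    rw [← add_mul, ← h1]
  refine ⟨h1, h2, h3, ?_, ?_, ?_, ?_⟩
  · -- continuity
    rw [hW]
    apply Continuous.continuousOn
    apply continuous_matrix
    intro i j
    fin_cases i <;> fin_cases j <;> simp <;> fun_prop
  · -- partial isometry
    intro θ _
    have hcs : (Real.cos θ) ^ 2 + (Real.sin θ) ^ 2 = 1 := Real.cos_sq_add_sin_sq θ
    simp only [hW]
    have hstar : star (!![v * p + (Real.cos θ) ^ 2 • (v * q), (Real.cos θ * Real.sin θ) • (v * q);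
         (Real.cos θ * Real.sin θ) • (v * q), (Real.sin θ) ^ 2 • (v * q)]) =
        !![p * star v + (Real.cos θ) ^ 2 • (q * star v),
           (Real.cos θ * Real.sin θ) • (q * star v);
           (Real.cos θ * Real.sin θ) • (q * star v), (Real.sin θ) ^ 2 • (q * star v)] := by
      rw [star_fin_two']
      congr 1 <;> simp [star_add, star_smul, star_mul, hp, hq]
    rw [hstar]
    exact key_partial_isometry (v * p) (v * q) (p * star v) (q * star v) _ _ hcs
      haa hbb hab hba haab hbba
  · -- W 0
    rw [hW]
    ext i j
    fin_cases i <;> fin_cases j <;> simp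
    exact h1.symm
  · -- W (π/2)
    rw [hW]
    ext i j
    fin_cases i <;> fin_cases j <;> simp
end

section
/- Let H be a complex Hilbert space, D ∈ B(H) a self-adjoint bounded operator, and f : ℝ → H a continuously differentiable function with compact support such that Re⟨f(0), D f(0)⟩ ≤ 0. Then ∫_{(0,∞)} ‖f′(t)‖² dt ≤ ∫_{(0,∞)} ‖f′(t) + D f(t)‖² dt and ∫_{(0,∞)} ‖D f(t)‖² dt ≤ ∫_{(0,∞)} ‖f′(t) + D f(t)‖² dt. -/
open MeasureTheory Set RCLike

/-!
For a symmetric `D`, `‖f' + D f‖² = ‖f'‖² + ‖D f‖² + (d/dt) Re⟪f, D f⟫`. Integrating over `(0, ∞)`,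
the compact support of `f` turns the last term into `-Re⟪f 0, D (f 0)⟫`, which the boundary
condition makes nonnegative.
-/

section

variable {𝕜 H : Type*} [RCLike 𝕜] [NormedAddCommGroup H] [InnerProductSpace 𝕜 H]
  [NormedSpace ℝ H] [IsScalarTower ℝ 𝕜 H]

theorem LinearMap.IsSymmetric.hasDerivAt_re_inner_apply_self {D : H →L[𝕜] H}
    (hD : (D : H →ₗ[𝕜] H).IsSymmetric) {f : ℝ → H} {f' : H} {t : ℝ} (hf : HasDerivAt f f' t) :
    HasDerivAt (fun s => re (inner 𝕜 (f s) (D (f s)))) (2 * re (inner 𝕜 f' (D (f t)))) t := by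
  have hDf : HasDerivAt (fun s => D (f s)) (D f') t :=
    (D.restrictScalars ℝ).hasFDerivAt.comp_hasDerivAt t hf
  have := reCLM.hasFDerivAt.comp_hasDerivAt t (hf.inner 𝕜 hDf)
  refine this.congr_deriv ?_
  have := hD (f t) f'
  simp only [ContinuousLinearMap.coe_coe] at this
  rw [reCLM_apply, map_add, ← this, ← inner_conj_symm, conj_re]
  ring

theorem Continuous.integrable_norm_sq_of_hasCompactSupport {X E : Type*} [TopologicalSpace X]
    [MeasurableSpace X] [OpensMeasurableSpace X] {μ : Measure X} [IsFiniteMeasureOnCompacts μ]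
    [NormedAddCommGroup E] {g : X → E} (hg : Continuous g) (hs : HasCompactSupport g) :
    Integrable (fun x => ‖g x‖ ^ 2) μ :=
  (hg.norm.pow 2).integrable_of_hasCompactSupport (hs.norm.comp_left (zero_pow two_ne_zero))

theorem LinearMap.IsSymmetric.integral_Ioi_norm_deriv_add_apply_sq {D : H →L[𝕜] H}
    (hD : (D : H →ₗ[𝕜] H).IsSymmetric) {f : ℝ → H} (hf : ContDiff ℝ 1 f)
    (hsupp : HasCompactSupport f) (a : ℝ) :
    ∫ t in Ioi a, ‖deriv f t + D (f t)‖ ^ 2 =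
      (∫ t in Ioi a, ‖deriv f t‖ ^ 2) + (∫ t in Ioi a, ‖D (f t)‖ ^ 2)
        - re (inner 𝕜 (f a) (D (f a))) := by
  set q : ℝ → ℝ := fun s => re (inner 𝕜 (f s) (D (f s)))
  have hq_deriv (t : ℝ) : deriv q t = 2 * re (inner 𝕜 (deriv f t) (D (f t))) :=
    (hD.hasDerivAt_re_inner_apply_self (hf.differentiable one_ne_zero t).hasDerivAt).deriv
  have hDf : ContDiff ℝ 1 (fun t => D (f t)) := (D.restrictScalars ℝ).contDiff.comp hf
  have hDf_supp : HasCompactSupport (fun t => D (f t)) := hsupp.comp_left (map_zero D)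
  have hq : ContDiff ℝ 1 q := (reCLM (K := 𝕜)).contDiff.comp (hf.inner 𝕜 hDf)
  have hq_supp : HasCompactSupport q := hsupp.mono fun s hs h0 => hs (by simp [q, h0])
  have hf'_int : Integrable (fun t => ‖deriv f t‖ ^ 2) :=
    (hf.continuous_deriv le_rfl).integrable_norm_sq_of_hasCompactSupport hsupp.deriv
  have hDf_int : Integrable (fun t => ‖D (f t)‖ ^ 2) :=
    hDf.continuous.integrable_norm_sq_of_hasCompactSupport hDf_supp
  have hq'_int : Integrable (deriv q) :=
    (hq.continuous_deriv le_rfl).integrable_of_hasCompactSupport hq_supp.deriv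
  calc ∫ t in Ioi a, ‖deriv f t + D (f t)‖ ^ 2
      = ∫ t in Ioi a, (‖deriv f t‖ ^ 2 + ‖D (f t)‖ ^ 2) + deriv q t := by
        congr 1 with t
        rw [hq_deriv, @norm_add_sq 𝕜]
        ring
    _ = (∫ t in Ioi a, ‖deriv f t‖ ^ 2) + (∫ t in Ioi a, ‖D (f t)‖ ^ 2)
          + ∫ t in Ioi a, deriv q t := by
        rw [integral_add (by exact (hf'_int.add hDf_int).integrableOn) hq'_int.integrableOn,
          integral_add hf'_int.integrableOn hDf_int.integrableOn]
    _ = _ := by rw [hq_supp.integral_Ioi_deriv_eq hq a, sub_eq_add_neg]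

end

/-- If in addition `Re⟨f(0), D f(0)⟩ ≤ 0` (the APS boundary condition),
then both `∫₀^∞ ‖f'‖²` and `∫₀^∞ ‖Df‖²` are dominated by `∫₀^∞ ‖f' + Df‖²`. -/
theorem stmt8 {H : Type*} [NormedAddCommGroup H] [InnerProductSpace ℂ H] [CompleteSpace H]
    (D : H →L[ℂ] H) (hD : IsSelfAdjoint D)
    (f : ℝ → H) (hf : ContDiff ℝ 1 f) (hsupp : HasCompactSupport f)
    (hbdry : (inner ℂ (f 0) (D (f 0)) : ℂ).re ≤ 0) :
    (∫ t in Set.Ioi (0 : ℝ), ‖deriv f t‖ ^ 2) ≤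
      (∫ t in Set.Ioi (0 : ℝ), ‖deriv f t + D (f t)‖ ^ 2) ∧
    (∫ t in Set.Ioi (0 : ℝ), ‖D (f t)‖ ^ 2) ≤
      (∫ t in Set.Ioi (0 : ℝ), ‖deriv f t + D (f t)‖ ^ 2) := by
  have hsplit := hD.isSymmetric.integral_Ioi_norm_deriv_add_apply_sq hf hsupp 0
  have hf'_nonneg : 0 ≤ ∫ t in Ioi (0 : ℝ), ‖deriv f t‖ ^ 2 := integral_nonneg fun _ => by positivity
  have hDf_nonneg : 0 ≤ ∫ t in Ioi (0 : ℝ), ‖D (f t)‖ ^ 2 := integral_nonneg fun _ => by positivity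
  rw [RCLike.re_to_complex] at hsplit
  constructor <;> linarith
end

section
/- Let H be a complex Hilbert space and let (gₙ) be a sequence of continuously differentiable compactly supported functions gₙ : ℝ → H such that both (gₙ) and (gₙ′) are Cauchy sequences in the L² norm over (0,∞) (i.e. for every ε > 0 there is N with ∫_{(0,∞)} ‖gₙ(t) − gₘ(t)‖² dt < ε and ∫_{(0,∞)} ‖gₙ′(t) − gₘ′(t)‖² dt < ε for all n, m ≥ N). Then there exists a continuous function ĝ : [0,∞) → H such that gₙ → ĝ uniformly on [0,∞) and ĝ(t) → 0 as t → ∞. -/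
/-!
Write `φ = ‖f‖²` for a compactly supported `C¹` function `f`. Since `φ` vanishes at infinity,
`‖f t‖² = -∫_t^∞ φ' = -∫_t^∞ 2⟪f, f'⟫ ≤ ∫_t^∞ (‖f‖² + ‖f'‖²)`, so the sup norm on `[0, ∞)` is
controlled by the `L²(0, ∞)` norms of `f` and `f'`. Applied to `gₙ - gₘ` this makes `(gₙ)`
uniformly Cauchy on `[0, ∞)`; its uniform limit is continuous, and it vanishes at infinity
because every `gₙ` does.
-/

open MeasureTheory Filter Set

section SupNormBound

variable {F : Type*} [NormedAddCommGroup F]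

lemma HasCompactSupport.integrable_sq_norm {f : ℝ → F} (hc : Continuous f)
    (hs : HasCompactSupport f) : Integrable fun s => ‖f s‖ ^ 2 := by
  have hsupp : HasCompactSupport fun s => ‖f s‖ ^ 2 :=
    hs.comp_left (g := fun x : F => ‖x‖ ^ 2) (by simp)
  exact (hc.norm.pow 2).integrable_of_hasCompactSupport hsupp

variable [InnerProductSpace ℝ F] {f : ℝ → F}

lemma neg_two_mul_inner_le_sq_norm_add_sq_norm (x y : F) :
    -(2 * inner ℝ x y) ≤ ‖x‖ ^ 2 + ‖y‖ ^ 2 := by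
  have := real_inner_le_norm x (-y)
  rw [inner_neg_right, norm_neg] at this
  nlinarith [two_mul_le_add_sq ‖x‖ ‖y‖]

lemma HasCompactSupport.integrable_sq_norm_add_sq_norm_deriv (hf : ContDiff ℝ 1 f)
    (hs : HasCompactSupport f) : Integrable fun s => ‖f s‖ ^ 2 + ‖deriv f s‖ ^ 2 :=
  (hs.integrable_sq_norm hf.continuous).add
    (hs.deriv.integrable_sq_norm (hf.continuous_deriv le_rfl))

lemma HasCompactSupport.sq_norm_le_setIntegral_Ioi (hf : ContDiff ℝ 1 f)
    (hs : HasCompactSupport f) (t : ℝ) :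
    ‖f t‖ ^ 2 ≤ ∫ s in Ioi t, (‖f s‖ ^ 2 + ‖deriv f s‖ ^ 2) := by
  have hderiv : ∀ s, deriv (‖f ·‖ ^ 2) s = 2 * inner ℝ (f s) (deriv f s) := fun s =>
    ((hf.differentiable one_ne_zero s).hasDerivAt.norm_sq).deriv
  have hφ : HasCompactSupport (‖f ·‖ ^ 2) := hs.comp_left (g := fun x : F => ‖x‖ ^ 2) (by simp)
  have hφ' : Integrable (deriv (‖f ·‖ ^ 2)) :=
    ((hf.norm_sq ℝ).continuous_deriv le_rfl).integrable_of_hasCompactSupport hφ.deriv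
  calc ‖f t‖ ^ 2 = ∫ s in Ioi t, -deriv (‖f ·‖ ^ 2) s := by
        rw [integral_neg, hφ.integral_Ioi_deriv_eq (hf.norm_sq ℝ) t, neg_neg]
    _ ≤ ∫ s in Ioi t, (‖f s‖ ^ 2 + ‖deriv f s‖ ^ 2) :=
        integral_mono hφ'.neg.integrableOn
          (hs.integrable_sq_norm_add_sq_norm_deriv hf).integrableOn fun s => by
            simpa only [hderiv] using neg_two_mul_inner_le_sq_norm_add_sq_norm (f s) (deriv f s)

lemma HasCompactSupport.sq_norm_le_of_le (hf : ContDiff ℝ 1 f) (hs : HasCompactSupport f)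
    {a t : ℝ} (hat : a ≤ t) :
    ‖f t‖ ^ 2 ≤ (∫ s in Ioi a, ‖f s‖ ^ 2) + ∫ s in Ioi a, ‖deriv f s‖ ^ 2 := by
  have hint := hs.integrable_sq_norm_add_sq_norm_deriv hf
  calc ‖f t‖ ^ 2 ≤ ∫ s in Ioi t, (‖f s‖ ^ 2 + ‖deriv f s‖ ^ 2) :=
        hs.sq_norm_le_setIntegral_Ioi hf t
    _ ≤ ∫ s in Ioi a, (‖f s‖ ^ 2 + ‖deriv f s‖ ^ 2) :=
        setIntegral_mono_set hint.integrableOn (Eventually.of_forall fun s => by positivity)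
          (Ioi_subset_Ioi hat).eventuallyLE
    _ = (∫ s in Ioi a, ‖f s‖ ^ 2) + ∫ s in Ioi a, ‖deriv f s‖ ^ 2 :=
        integral_add (hs.integrable_sq_norm hf.continuous).integrableOn
          (hs.deriv.integrable_sq_norm (hf.continuous_deriv le_rfl)).integrableOn

lemma uniformCauchySeqOn_Ici_of_cauchy_integral_sq_norm {g : ℕ → ℝ → F}
    (hg : ∀ n, ContDiff ℝ 1 (g n)) (hsupp : ∀ n, HasCompactSupport (g n)) (a : ℝ)
    (hCauchy : ∀ ε > (0 : ℝ), ∃ N : ℕ, ∀ n ≥ N, ∀ m ≥ N,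
      (∫ t in Ioi a, ‖g n t - g m t‖ ^ 2) < ε)
    (hCauchy' : ∀ ε > (0 : ℝ), ∃ N : ℕ, ∀ n ≥ N, ∀ m ≥ N,
      (∫ t in Ioi a, ‖deriv (g n) t - deriv (g m) t‖ ^ 2) < ε) :
    UniformCauchySeqOn g atTop (Ici a) := by
  rw [Metric.uniformCauchySeqOn_iff]
  intro ε hε
  obtain ⟨N₁, hN₁⟩ := hCauchy (ε ^ 2 / 2) (by positivity)
  obtain ⟨N₂, hN₂⟩ := hCauchy' (ε ^ 2 / 2) (by positivity)
  refine ⟨max N₁ N₂, fun n hn m hm t ht => ?_⟩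
  rw [ge_iff_le, max_le_iff] at hn hm
  have hderiv : deriv (g n - g m) = deriv (g n) - deriv (g m) := funext fun s =>
    deriv_sub ((hg n).differentiable one_ne_zero s) ((hg m).differentiable one_ne_zero s)
  have hbound := HasCompactSupport.sq_norm_le_of_le (f := g n - g m) ((hg n).sub (hg m))
    ((hsupp n).sub (hsupp m)) (mem_Ici.mp ht)
  simp only [hderiv, Pi.sub_apply] at hbound
  rw [dist_eq_norm]
  refine lt_of_pow_lt_pow_left₀ 2 hε.le ?_
  linarith [hN₁ n hn.1 m hm.1, hN₂ n hn.2 m hm.2]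

end SupNormBound

lemma UniformCauchySeqOn.tendstoUniformlyOn_limUnder {ι α β : Type*} [Nonempty ι]
    [SemilatticeSup ι] [UniformSpace β] [CompleteSpace β] [Nonempty β] {F : ι → α → β} {s : Set α}
    (hF : UniformCauchySeqOn F atTop s) :
    TendstoUniformlyOn F (fun x => limUnder atTop (F · x)) atTop s :=
  hF.tendstoUniformlyOn_of_tendsto fun _ hx => (hF.cauchySeq hx).tendsto_limUnder

lemma TendstoUniformlyOn.tendsto_atTop_of_eventually_tendsto {ι α β : Type*} [Preorder α]
    [UniformSpace β] {p : Filter ι} [p.NeBot] {F : ι → α → β} {f : α → β} {a : α} {ℓ : β}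
    (hF : TendstoUniformlyOn F f p (Ici a)) (hlim : ∀ᶠ i in p, Tendsto (F i) atTop (nhds ℓ)) :
    Tendsto f atTop (nhds ℓ) :=
  ((tendstoUniformlyOn_iff_tendstoUniformlyOnFilter.mp hF).mono_right
    (le_principal_iff.mpr (Ici_mem_atTop a))).tendsto_of_eventually_tendsto hlim tendsto_const_nhds

/-- If `(gₙ)` is a sequence of `C¹` compactly supported `H`-valued
functions such that `(gₙ)` and `(gₙ')` are Cauchy in `L²(0, ∞)`, then the `gₙ` converge
uniformly on `[0, ∞)` to a continuous function `ĝ` vanishing at infinity. -/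
theorem stmt11 {H : Type*} [NormedAddCommGroup H] [InnerProductSpace ℂ H]
    [CompleteSpace H]
    (g : ℕ → ℝ → H) (hg : ∀ n, ContDiff ℝ 1 (g n))
    (hsupp : ∀ n, HasCompactSupport (g n))
    (hCauchy : ∀ ε > (0 : ℝ), ∃ N : ℕ, ∀ n ≥ N, ∀ m ≥ N,
      (∫ t in Set.Ioi (0 : ℝ), ‖g n t - g m t‖ ^ 2) < ε)
    (hCauchy' : ∀ ε > (0 : ℝ), ∃ N : ℕ, ∀ n ≥ N, ∀ m ≥ N,
      (∫ t in Set.Ioi (0 : ℝ), ‖deriv (g n) t - deriv (g m) t‖ ^ 2) < ε) :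
    ∃ ghat : ℝ → H,
      ContinuousOn ghat (Set.Ici (0 : ℝ)) ∧
      TendstoUniformlyOn (fun n t => g n t) ghat atTop (Set.Ici (0 : ℝ)) ∧
      Tendsto ghat atTop (nhds 0) := by
  let _ : InnerProductSpace ℝ H := InnerProductSpace.complexToReal
  have hU := (uniformCauchySeqOn_Ici_of_cauchy_integral_sq_norm hg hsupp 0 hCauchy
    hCauchy').tendstoUniformlyOn_limUnder
  refine ⟨_, hU.continuousOn (Frequently.of_forall fun n => (hg n).continuous.continuousOn), hU,
    hU.tendsto_atTop_of_eventually_tendsto (Eventually.of_forall fun n => ?_)⟩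
  exact (hsupp n).is_zero_at_infty.mono_left atTop_le_cocompact
end

section
/- Let H be a complex Hilbert space, c > 0, and let A : ℝ → B(H) be a norm-continuous family of self-adjoint bounded operators satisfying Re⟨A(t) x, x⟩ ≤ −c (1+t²)^{−1} ‖x‖² for all t ≥ 0 and x ∈ H. Suppose σ : [0,∞) → H is differentiable with σ′(t) = −A(t) σ(t) for all t ≥ 0, and σ(t₀) ≠ 0 for some t₀ ≥ 0. Then σ is not square-integrable: the function t ↦ ‖σ(t)‖² is not Lebesgue-integrable on (0,∞). -/
/-!
Since `Re⟨A(t)x, x⟩ ≤ 0`, the energy `‖σ t‖²` has nonnegative derivative `-2 Re⟨A(t)σ, σ⟩` and is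
nondecreasing. It therefore stays above `‖σ t₀‖² > 0` on `(t₀, ∞)`, a set of infinite measure.
-/

open MeasureTheory Set RCLike
open scoped InnerProductSpace

section NormSq

variable {E : Type*} [NormedAddCommGroup E] [InnerProductSpace ℂ E]

theorem HasDerivWithinAt.norm_sq_of_complex {f : ℝ → E} {f' : E} {s : Set ℝ} {x : ℝ}
    (hf : HasDerivWithinAt f f' s x) :
    HasDerivWithinAt (‖f ·‖ ^ 2) (2 * re ⟪f x, f'⟫_ℂ) s x := by
  let _ := InnerProductSpace.rclikeToReal ℂ E
  simpa [real_inner_eq_re_inner ℂ] using hf.norm_sq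

theorem monotoneOn_norm_sq_of_re_inner_deriv_nonneg {D : Set ℝ} (hD : Convex ℝ D)
    {σ v : ℝ → E} (hσ : ∀ t ∈ D, HasDerivWithinAt σ (v t) D t)
    (hv : ∀ t ∈ interior D, 0 ≤ re ⟪σ t, v t⟫_ℂ) :
    MonotoneOn (‖σ ·‖ ^ 2) D := by
  have hder t (ht : t ∈ D) := (hσ t ht).norm_sq_of_complex
  exact monotoneOn_of_hasDerivWithinAt_nonneg hD (fun t ht => (hder t ht).continuousWithinAt)
    (fun t ht => (hder t (interior_subset ht)).mono interior_subset)
    fun t ht => mul_nonneg zero_le_two (hv t ht)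

end NormSq

theorem not_integrableOn_Ioi_of_monotoneOn {f : ℝ → ℝ} {a : ℝ} (hf : MonotoneOn f (Ici a))
    (ha : 0 < f a) : ¬ IntegrableOn f (Ioi a) := by
  intro hint
  have hconst : IntegrableOn (fun _ => f a) (Ioi a) := by
    refine hint.mono' aestronglyMeasurable_const ((ae_restrict_iff' measurableSet_Ioi).2
      (Filter.Eventually.of_forall fun t ht => ?_))
    rw [Real.norm_eq_abs, abs_of_pos ha]
    exact hf self_mem_Ici (mem_Ici.2 (le_of_lt ht)) (le_of_lt ht)
  simp [integrableOn_const_iff, ha.ne', Real.volume_Ioi] at hconst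

theorem stmt16_general {H : Type*} [NormedAddCommGroup H] [InnerProductSpace ℂ H]
    (c : ℝ) (hc : 0 < c)
    (A : ℝ → H →L[ℂ] H)
    (hAneg : ∀ t : ℝ, 0 ≤ t → ∀ x : H,
      (inner ℂ (A t x) x : ℂ).re ≤ -c * (1 + t ^ 2)⁻¹ * ‖x‖ ^ 2)
    (σ : ℝ → H)
    (hσ : ∀ t : ℝ, 0 ≤ t → HasDerivWithinAt σ (-(A t (σ t))) (Set.Ici (0 : ℝ)) t)
    (t₀ : ℝ) (ht₀ : 0 ≤ t₀) (hne : σ t₀ ≠ 0) :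
    ¬ IntegrableOn (fun t => ‖σ t‖ ^ 2) (Set.Ioi (0 : ℝ)) := by
  have hdissipative : ∀ t ∈ interior (Ici (0 : ℝ)), 0 ≤ re ⟪σ t, -(A t (σ t))⟫_ℂ := by
    intro t ht
    have hdecay_nonneg : 0 ≤ c * (1 + t ^ 2)⁻¹ * ‖σ t‖ ^ 2 := by positivity
    have hneg := hAneg t (interior_subset ht) (σ t)
    rw [inner_neg_right, map_neg, inner_re_symm, re_to_complex]
    linarith
  have hmono := monotoneOn_norm_sq_of_re_inner_deriv_nonneg (convex_Ici 0) hσ hdissipative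
  intro hint
  exact not_integrableOn_Ioi_of_monotoneOn (hmono.mono (Ici_subset_Ici.2 ht₀))
    (by positivity) (hint.mono_set (Ioi_subset_Ioi ht₀))

/-- If `A(t)` is a norm-continuous family of self-adjoint bounded
operators with `Re⟨A(t)x, x⟩ ≤ -c(1+t²)⁻¹‖x‖²` for `t ≥ 0` (`c > 0`), and
`σ : [0,∞) → H` solves `σ' = -A(t)σ` and is nonzero somewhere, then `t ↦ ‖σ(t)‖²` is not
integrable on `(0, ∞)`. -/
theorem stmt16 {H : Type*} [NormedAddCommGroup H] [InnerProductSpace ℂ H]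
    [CompleteSpace H]
    (c : ℝ) (hc : 0 < c)
    (A : ℝ → H →L[ℂ] H) (hA : Continuous A)
    (hAsa : ∀ t : ℝ, IsSelfAdjoint (A t))
    (hAneg : ∀ t : ℝ, 0 ≤ t → ∀ x : H,
      (inner ℂ (A t x) x : ℂ).re ≤ -c * (1 + t ^ 2)⁻¹ * ‖x‖ ^ 2)
    (σ : ℝ → H)
    (hσ : ∀ t : ℝ, 0 ≤ t → HasDerivWithinAt σ (-(A t (σ t))) (Set.Ici (0 : ℝ)) t)
    (t₀ : ℝ) (ht₀ : 0 ≤ t₀) (hne : σ t₀ ≠ 0) :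
    ¬ IntegrableOn (fun t => ‖σ t‖ ^ 2) (Set.Ioi (0 : ℝ)) :=
  stmt16_general c hc A hAneg σ hσ t₀ ht₀ hne
end

section
/- Let X be a complex Banach space, B a bounded linear operator on X, and x ∈ X. Define σ(t) = exp(−(arctan t)·B) x and ρ(t) = (1+t²)^{−1/2} σ(t) for t ≥ 0. Then: (1) ρ(0) = x; (2) σ is differentiable with σ′(t) = −(1+t²)^{−1} B σ(t) for all t ≥ 0 (equivalently, (1+t²)^{−1/2}·d/dt(√(1+t²)·ρ(t)) + (1+t²)^{−1} B ρ(t) = 0); (3) t·ρ(t) → exp(−(π/2)·B) x in norm as t → ∞; and (4) the function t ↦ t·ρ(t) − exp(−(π/2)·B) x is square-integrable on (0,∞), i.e. ∫_{(0,∞)} ‖t ρ(t) − exp(−(π/2) B) x‖² dt < ∞. -/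
/-!
Substitute `u = 1/t`: for `t > 0`, `arctan t = π/2 - arctan u` and `t/√(1+t²) = 1/√(1+u²)`, so
`t ρ(t) = G(1/t)` with `G(u) = (1+u²)^{-1/2} exp(-(π/2 - arctan u) B) x`. The curve `G` is
differentiable at `u = 0` with `G(0) = exp(-(π/2) B) x`, hence `t ρ(t) - G(0) = O(1/t)`; this gives
the limit, and square integrability at infinity since `1/t²` is integrable there.
-/

open MeasureTheory Filter Asymptotics Real

theorem DifferentiableAt.comp_inv_sub_isBigO_atTop {F : Type*} [NormedAddCommGroup F]
    [NormedSpace ℝ F] {G : ℝ → F} (hG : DifferentiableAt ℝ G 0) :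
    (fun t : ℝ => G t⁻¹ - G 0) =O[atTop] fun t => t⁻¹ := by
  simpa [Function.comp_def] using hG.hasDerivAt.isBigO_sub.comp_tendsto tendsto_inv_atTop_zero

theorem integrableOn_Ioi_norm_sq_of_isBigO_inv {F : Type*} [NormedAddCommGroup F]
    {f : ℝ → F} (hf : Continuous f) (ho : f =O[atTop] fun t => t⁻¹) (a : ℝ) :
    IntegrableOn (fun t => ‖f t‖ ^ 2) (Set.Ioi a) := by
  refine IntegrableOn.mono_set ?_ Set.Ioi_subset_Ici_self
  refine ((hf.norm.pow 2).locallyIntegrable.locallyIntegrableOn _).integrableOn_of_isBigO_atTop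
    (g := fun t => t ^ (-2 : ℝ)) ?_ (integrableAtFilter_rpow_atTop_iff.mpr (by norm_num))
  refine (ho.norm_left.pow 2).trans (EventuallyEq.isBigO ?_)
  filter_upwards [eventually_gt_atTop 0] with t ht
  rw [rpow_neg ht.le, inv_pow]
  norm_cast

theorem inv_sqrt_one_add_inv_sq {t : ℝ} (ht : 0 < t) :
    (√(1 + t⁻¹ ^ 2))⁻¹ = t * (√(1 + t ^ 2))⁻¹ := by
  rw [show 1 + t⁻¹ ^ 2 = (1 + t ^ 2) / t ^ 2 by field_simp; ring, sqrt_div' _ (sq_nonneg t),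
    sqrt_sq ht.le, inv_div, div_eq_mul_inv]

section ExpCurve

variable {X : Type*} [NormedAddCommGroup X] [NormedSpace ℂ X] [CompleteSpace X]

theorem hasDerivAt_exp_neg_smul_apply (B : X →L[ℂ] X) (x : X) (r : ℝ) :
    HasDerivAt (fun s : ℝ => NormedSpace.exp (((-s : ℝ) : ℂ) • B) x)
      (-B (NormedSpace.exp (((-r : ℝ) : ℂ) • B) x)) r := by
  have hexp := (hasDerivAt_exp_smul_const' B ((-r : ℝ) : ℂ)).clm_apply (hasDerivAt_const _ x)
  have hneg : HasDerivAt (fun s : ℝ => ((-s : ℝ) : ℂ)) (-1) r := by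
    simpa using (hasDerivAt_id r).neg.ofReal_comp
  simpa [Function.comp_def] using hexp.scomp r hneg

theorem hasDerivAt_exp_neg_arctan_smul_apply (B : X →L[ℂ] X) (x : X) (t : ℝ) :
    HasDerivAt (fun s : ℝ => NormedSpace.exp (((-arctan s : ℝ) : ℂ) • B) x)
      (-(((1 + t ^ 2)⁻¹ : ℝ) • B (NormedSpace.exp (((-arctan t : ℝ) : ℂ) • B) x))) t := by
  have h := (hasDerivAt_exp_neg_smul_apply B x (arctan t)).scomp t (hasDerivAt_arctan' t)
  rwa [smul_neg] at h

theorem smul_inv_sqrt_smul_exp_neg_arctan_sub_isBigO (B : X →L[ℂ] X) (x : X) :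
    (fun t : ℝ => t • ((√(1 + t ^ 2))⁻¹ • NormedSpace.exp (((-arctan t : ℝ) : ℂ) • B) x)
      - NormedSpace.exp (((-(π / 2) : ℝ) : ℂ) • B) x) =O[atTop] fun t => t⁻¹ := by
  set E := fun s : ℝ => NormedSpace.exp (((-s : ℝ) : ℂ) • B) x
  have hE : Differentiable ℝ E := fun r => (hasDerivAt_exp_neg_smul_apply B x r).differentiableAt
  have hG : DifferentiableAt ℝ (fun u : ℝ => (√(1 + u ^ 2))⁻¹ • E (π / 2 - arctan u)) 0 := by
    have := differentiable_arctan
    fun_prop (disch := norm_num)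
  refine EventuallyEq.trans_isBigO ?_ hG.comp_inv_sub_isBigO_atTop
  filter_upwards [eventually_gt_atTop 0] with t ht
  simp only [E, arctan_inv_of_pos ht, inv_sqrt_one_add_inv_sq ht, sub_sub_cancel, arctan_zero,
    sub_zero, zero_pow two_ne_zero, add_zero, sqrt_one, inv_one, one_smul, smul_smul]

end ExpCurve

/-- For a bounded operator `B` on a Banach space `X` and `x ∈ X`, set
`σ(t) = exp(-(arctan t)B) x` and `ρ(t) = (1+t²)^{-1/2} σ(t)`. Then `ρ(0) = x`,
`σ' = -(1+t²)⁻¹ B σ` for `t ≥ 0`, `t ρ(t) → exp(-(π/2)B) x` in norm as `t → ∞`, and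
`t ↦ ‖t ρ(t) - exp(-(π/2)B) x‖²` is integrable on `(0, ∞)`. -/
theorem stmt17 {X : Type*} [NormedAddCommGroup X] [NormedSpace ℂ X] [CompleteSpace X]
    (B : X →L[ℂ] X) (x : X)
    (σ ρ : ℝ → X)
    (hσ : σ = fun t : ℝ => NormedSpace.exp (((-Real.arctan t : ℝ) : ℂ) • B) x)
    (hρ : ρ = fun t : ℝ => (Real.sqrt (1 + t ^ 2))⁻¹ • σ t) :
    ρ 0 = x ∧
    (∀ t : ℝ, 0 ≤ t →
      HasDerivAt σ (-(((1 + t ^ 2)⁻¹ : ℝ) • B (σ t))) t) ∧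
    Tendsto (fun t : ℝ => t • ρ t) atTop
      (nhds (NormedSpace.exp (((-(Real.pi / 2) : ℝ) : ℂ) • B) x)) ∧
    IntegrableOn
      (fun t : ℝ => ‖t • ρ t - NormedSpace.exp (((-(Real.pi / 2) : ℝ) : ℂ) • B) x‖ ^ 2)
      (Set.Ioi (0 : ℝ)) := by
  subst hσ hρ
  have hderiv := hasDerivAt_exp_neg_arctan_smul_apply B x
  have hdecay := smul_inv_sqrt_smul_exp_neg_arctan_sub_isBigO B x
  refine ⟨by simp, fun t _ => hderiv t, ?_, ?_⟩
  · exact tendsto_sub_nhds_zero_iff.mp (hdecay.trans_tendsto tendsto_inv_atTop_zero)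
  · have hσ : Continuous fun t : ℝ => NormedSpace.exp (((-arctan t : ℝ) : ℂ) • B) x :=
      continuous_iff_continuousAt.2 fun t => (hderiv t).continuousAt
    refine integrableOn_Ioi_norm_sq_of_isBigO_inv ?_ hdecay 0
    fun_prop (disch := exact fun t => by positivity)
end

section
/- Let H be a complex Hilbert space, v ∈ B(H) a partial isometry (v ∘ v* ∘ v = v), and P ∈ B(H) an orthogonal projection (P = P* = P²) such that P commutes with each of v* v, v v*, v P v*, and v* P v. Then: (1) {x ∈ H : v* v x = x, P x = x, and P(v x) = 0} equals the range of the operator P v* (1 − P) v; and (2) {x ∈ H : v v* x = x, P x = x, and P(v* x) = 0} equals the range of the operator P v (1 − P) v*. In other words, the kernel of the Toeplitz-type operator P v P : (v* v P)(H) → (v v* P)(H) is P v* (1−P) v (H), and the kernel of its adjoint P v* P : (v v* P)(H) → (v* v P)(H) is P v (1−P) v* (H). -/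
theorem stmt19_aux {H : Type*} [NormedAddCommGroup H] [InnerProductSpace ℂ H]
    [CompleteSpace H]
    (v P : H →L[ℂ] H) (hv : v * star v * v = v)
    (hPproj : P * P = P)
    (hc1 : Commute P (star v * v)) (hc3 : Commute P (v * P * star v)) :
    {x : H | (star v * v) x = x ∧ P x = x ∧ P (v x) = 0} =
      Set.range ⇑(P * star v * (1 - P) * v) := by
  have hsv : star v * v * star v = star v := by
    have := congrArg star hv
    simpa [star_mul, mul_assoc] using this
  have hQA : (star v * v) * (P * star v * (1 - P) * v) = P * star v * (1 - P) * v := by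
    calc (star v * v) * (P * star v * (1 - P) * v)
        = (star v * v * P) * (star v * (1 - P) * v) := by simp only [mul_assoc]
      _ = (P * (star v * v)) * (star v * (1 - P) * v) := by rw [← hc1.eq]
      _ = P * ((star v * v * star v) * ((1 - P) * v)) := by simp only [mul_assoc]
      _ = P * (star v * ((1 - P) * v)) := by rw [hsv]
      _ = P * star v * (1 - P) * v := by simp only [mul_assoc]
  have hPA : P * (P * star v * (1 - P) * v) = P * star v * (1 - P) * v := by
    simp only [← mul_assoc, hPproj]
  have h0 : P * (1 - P) = 0 := by simp [mul_sub, hPproj]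
  have hPvA : P * (v * (P * star v * (1 - P) * v)) = 0 := by
    calc P * (v * (P * star v * (1 - P) * v))
        = (P * (v * P * star v)) * ((1 - P) * v) := by simp only [mul_assoc]
      _ = ((v * P * star v) * P) * ((1 - P) * v) := by rw [hc3.eq]
      _ = (v * P * star v) * ((P * (1 - P)) * v) := by simp only [mul_assoc]
      _ = 0 := by rw [h0]; simp
  ext x
  simp only [Set.mem_setOf_eq, Set.mem_range]
  constructor
  · rintro ⟨h1, h2, h3⟩
    refine ⟨x, ?_⟩
    have hvx : (1 - P) (v x) = v x := by
      simp [ContinuousLinearMap.sub_apply, h3]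
    have h1' : star v (v x) = x := h1
    show P (star v ((1 - P) (v x))) = x
    rw [hvx, h1', h2]
  · rintro ⟨y, rfl⟩
    refine ⟨DFunLike.congr_fun hQA y, DFunLike.congr_fun hPA y, ?_⟩
    exact DFunLike.congr_fun hPvA y

/-- Let `v` be a partial isometry and `P` an orthogonal projection on a
Hilbert space, with `P` commuting with `v* v`, `v v*`, `v P v*`, and `v* P v`. Then the
kernel of the Toeplitz operator `P v P : (v* v P)(H) → (v v* P)(H)`, i.e.
`{x : v* v x = x, P x = x, P(v x) = 0}`, equals the range of `P v* (1-P) v`, and the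
kernel of its adjoint `P v* P`, i.e. `{x : v v* x = x, P x = x, P(v* x) = 0}`, equals the
range of `P v (1-P) v*`. -/
theorem stmt19 {H : Type*} [NormedAddCommGroup H] [InnerProductSpace ℂ H]
    [CompleteSpace H]
    (v P : H →L[ℂ] H) (hv : v * star v * v = v)
    (hPsa : star P = P) (hPproj : P * P = P)
    (hc1 : Commute P (star v * v)) (hc2 : Commute P (v * star v))
    (hc3 : Commute P (v * P * star v)) (hc4 : Commute P (star v * P * v)) :
    {x : H | (star v * v) x = x ∧ P x = x ∧ P (v x) = 0} =
      Set.range ⇑(P * star v * (1 - P) * v) ∧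
    {x : H | (v * star v) x = x ∧ P x = x ∧ P (star v x) = 0} =
      Set.range ⇑(P * v * (1 - P) * star v) := by
  have hsv : star v * v * star v = star v := by
    have := congrArg star hv
    simpa [star_mul, mul_assoc] using this
  refine ⟨stmt19_aux v P hv hPproj hc1 hc3, ?_⟩
  have h2 := stmt19_aux (star v) P (by simpa [star_star] using hsv) hPproj
    (by simpa [star_star] using hc2) (by simpa [star_star] using hc4)
  simpa [star_star] using h2
end
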